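/- Let R be a U_opt-LL eDCTRS over a signature F that is non-LV or non-RV. Then U_opt is sound for R w.r.t. EV-safe reduction: for all terms s, t ∈ T(F,V), if s ↪*_{U_opt(R)} t (an EV-safe reduction sequence of U_opt(R)), then s →*_R t. -/

import Mathlib

set_option maxHeartbeats 1000000

universe u

/-! ## Terms -/

inductive Term (α : Type u) : Type u where
  | var : ℕ → Term α
  | app : α → List (Term α) → Term α

namespace Term

variable {α : Type u}

/-- The list of variable occurrences of a term (left-to-right). -/
def varList : Term α → List ℕ
  | var x => [x]
  | app _ ts => ts.attach.foldr (fun t acc => varList t.1 ++ acc) []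
decreasing_by
  simp only [Term.app.sizeOf_spec]
  have := List.sizeOf_lt_of_mem t.2
  omega

/-- The list of (function symbol, number of arguments) occurrences of a term. -/
def apps : Term α → List (α × ℕ)
  | var _ => []
  | app f ts => (f, ts.length) :: ts.attach.foldr (fun t acc => apps t.1 ++ acc) []
decreasing_by
  simp only [Term.app.sizeOf_spec]
  have := List.sizeOf_lt_of_mem t.2
  omega

/-- `Var(t)`: the set of variables of a term. -/
def varFinset (t : Term α) : Finset ℕ := t.varList.toFinset

/-- All function symbols of the term belong to the signature `F`. -/
def overSig (F : Set α) (t : Term α) : Prop := ∀ p ∈ t.apps, p.1 ∈ F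

/-- `t ∈ T(F,V)`: all function symbols belong to `F` and are applied
according to their arities. -/
def inT (F : Set α) (ar : α → ℕ) (t : Term α) : Prop :=
  ∀ p ∈ t.apps, p.1 ∈ F ∧ ar p.1 = p.2

/-- A term is linear if no variable occurs twice in it. -/
def Linear (t : Term α) : Prop := t.varList.Nodup

/-- A term is ground if it contains no variable. -/
def Ground (t : Term α) : Prop := t.varList = []

/-- Applying a substitution to a term. -/
def subst (σ : ℕ → Term α) : Term α → Term α
  | var x => σ x
  | app f ts => app f (ts.attach.map (fun t => subst σ t.1))
decreasing_by
  simp only [Term.app.sizeOf_spec]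
  have := List.sizeOf_lt_of_mem t.2
  omega

def isVar : Term α → Prop
  | var _ => True
  | app _ _ => False

def root? : Term α → Option α
  | var _ => none
  | app f _ => some f

def args : Term α → List (Term α)
  | var _ => []
  | app _ ts => ts

end Term

def junkPair {α : Type u} : Term α × Term α := (Term.var 0, Term.var 0)

/-! ## Conditional rewrite rules -/

/-- An extended (oriented) conditional rewrite rule `l → r ⇐ s₁ ↠ t₁; …; s_k ↠ t_k`,
where `conds` is the list of pairs `(sᵢ, tᵢ)`. -/
structure ERule (α : Type u) : Type u where
  lhs : Term α
  rhs : Term α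
  conds : List (Term α × Term α)

namespace ERule

variable {α : Type u}

def nonLV (ρ : ERule α) : Prop := ¬ ρ.lhs.isVar
def nonRV (ρ : ERule α) : Prop := ¬ ρ.rhs.isVar

/-- `X_{j+1} = Var(l, t_1, …, t_j)` (0-based index `j`). -/
def Xset (ρ : ERule α) (j : ℕ) : Finset ℕ :=
  ρ.lhs.varFinset ∪ ((ρ.conds.take j).map (fun c => c.2.varFinset)).foldr (· ∪ ·) ∅

/-- `Y_{j+1} = Var(r, t_{j+1}, s_{j+2}, t_{j+2}, …, s_k, t_k)` (0-based index `j`). -/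
def Yset (ρ : ERule α) (j : ℕ) : Finset ℕ :=
  ρ.rhs.varFinset ∪ (ρ.conds.getD j junkPair).2.varFinset ∪
    ((ρ.conds.drop (j+1)).map (fun c => c.1.varFinset ∪ c.2.varFinset)).foldr (· ∪ ·) ∅

/-- `Z_i = X_i ∩ Y_i`. -/
def Zset (ρ : ERule α) (j : ℕ) : Finset ℕ := ρ.Xset j ∩ ρ.Yset j

/-- Determinism: `Var(sᵢ) ⊆ Var(l, t₁, …, t_{i-1})`. -/
def Det (ρ : ERule α) : Prop :=
  ∀ j < ρ.conds.length, (ρ.conds.getD j junkPair).1.varFinset ⊆ ρ.Xset j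

/-- Type 3: `Var(r) ⊆ Var(l, s₁, t₁, …, s_k, t_k)`. -/
def Type3 (ρ : ERule α) : Prop :=
  ρ.rhs.varFinset ⊆
    ρ.lhs.varFinset ∪ ((ρ.conds.map (fun c => c.1.varFinset ∪ c.2.varFinset)).foldr (· ∪ ·) ∅)

/-- Left-linearity of a rule. -/
def LL (ρ : ERule α) : Prop := ρ.lhs.Linear
/-- Right-linearity of a rule. -/
def RL (ρ : ERule α) : Prop := ρ.rhs.Linear
/-- Non-erasingness of a rule: `Var(l) ⊆ Var(r)`. -/
def NE (ρ : ERule α) : Prop := ρ.lhs.varFinset ⊆ ρ.rhs.varFinset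

/-- `EVar(l → r) = Var(r) \\ Var(l)`, the extra variables of a rule. -/
def extraVars (ρ : ERule α) : Finset ℕ := ρ.rhs.varFinset \ ρ.lhs.varFinset

/-- The inverted rule `(l → r ⇐ s₁ ↠ t₁; …; s_k ↠ t_k)⁻¹ = r → l ⇐ t_k ↠ s_k; …; t₁ ↠ s₁`. -/
def inv (ρ : ERule α) : ERule α :=
  ⟨ρ.rhs, ρ.lhs, (ρ.conds.map (fun c => (c.2, c.1))).reverse⟩

def allVarFinset (ρ : ERule α) : Finset ℕ :=
  ρ.lhs.varFinset ∪ ρ.rhs.varFinset ∪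
    ((ρ.conds.map (fun c => c.1.varFinset ∪ c.2.varFinset)).foldr (· ∪ ·) ∅)

/-- A number strictly larger than every variable of the rule; used to pick fresh variables. -/
def freshBase (ρ : ERule α) : ℕ := ρ.allVarFinset.sup id + 1

/-- All terms of the rule use only symbols of `F`. -/
def overSig (F : Set α) (ρ : ERule α) : Prop :=
  ρ.lhs.overSig F ∧ ρ.rhs.overSig F ∧ ∀ c ∈ ρ.conds, c.1.overSig F ∧ c.2.overSig F

/-- All terms of the rule are in `T(F,V)` (symbols of `F`, arity-correct). -/
def inT (F : Set α) (ar : α → ℕ) (ρ : ERule α) : Prop :=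
  ρ.lhs.inT F ar ∧ ρ.rhs.inT F ar ∧ ∀ c ∈ ρ.conds, c.1.inT F ar ∧ c.2.inT F ar

end ERule

/-! ## Reduction relations -/

/-- One-hole contexts. -/
inductive Ctx (α : Type u) : Type u where
  | hole : Ctx α
  | app : α → List (Term α) → Ctx α → List (Term α) → Ctx α

def Ctx.plug {α : Type u} : Ctx α → Term α → Term α
  | .hole, t => t
  | .app f pre c post, t => .app f (pre ++ c.plug t :: post)

/-- The approximations `→_{(n),R}` of the reduction relation of an oriented eCTRS. -/
def RedN {α : Type u} (R : Set (ERule α)) : ℕ → Term α → Term α → Prop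
  | 0 => fun _ _ => False
  | n + 1 => fun s t =>
      RedN R n s t ∨
      ∃ ρ ∈ R, ∃ C : Ctx α, ∃ σ : ℕ → Term α,
        s = C.plug (ρ.lhs.subst σ) ∧ t = C.plug (ρ.rhs.subst σ) ∧
        ∀ c ∈ ρ.conds, Relation.ReflTransGen (RedN R n) (c.1.subst σ) (c.2.subst σ)

/-- The reduction relation `→_R` of an oriented eCTRS. -/
def Red {α : Type u} (R : Set (ERule α)) (s t : Term α) : Prop := ∃ n, RedN R n s t

/-- `→*_R`. -/
def RedStar {α : Type u} (R : Set (ERule α)) : Term α → Term α → Prop :=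
  Relation.ReflTransGen (Red R)

/-- The approximations of the reduction relation of a join CTRS
(conditions interpreted as joinability). -/
def JRedN {α : Type u} (R : Set (ERule α)) : ℕ → Term α → Term α → Prop
  | 0 => fun _ _ => False
  | n + 1 => fun s t =>
      JRedN R n s t ∨
      ∃ ρ ∈ R, ∃ C : Ctx α, ∃ σ : ℕ → Term α,
        s = C.plug (ρ.lhs.subst σ) ∧ t = C.plug (ρ.rhs.subst σ) ∧
        ∀ c ∈ ρ.conds, ∃ w, Relation.ReflTransGen (JRedN R n) (c.1.subst σ) w ∧
          Relation.ReflTransGen (JRedN R n) (c.2.subst σ) w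

/-- The reduction relation of a join CTRS. -/
def JRed {α : Type u} (R : Set (ERule α)) (s t : Term α) : Prop := ∃ n, JRedN R n s t

def JRedStar {α : Type u} (R : Set (ERule α)) : Term α → Term α → Prop :=
  Relation.ReflTransGen (JRed R)

/-- The underlying unconditional system `R_u`. -/
def Ru {α : Type u} (R : Set (ERule α)) : Set (ERule α) :=
  (fun ρ : ERule α => ⟨ρ.lhs, ρ.rhs, []⟩) '' R

/-- Normal form w.r.t. a system. -/
def IsNF {α : Type u} (R : Set (ERule α)) (t : Term α) : Prop := ∀ w, ¬ Red R t w

/-! ## Unravelings for deterministic CTRSs -/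

/-- The fixed-order sequence of a finite set of variables. -/
def seqOf (s : Finset ℕ) : List ℕ := s.sort (· ≤ ·)

/-- `U(t, x⃗)`: a U symbol applied to a term followed by a sequence of variables. -/
def mkU {α : Type u} (f : α) (t : Term α) (xs : List ℕ) : Term α :=
  .app f (t :: xs.map Term.var)

/-- Generic sequential unraveling of a single deterministic rule, where `carry j` is
the variable sequence carried by the `j`-th U symbol. -/
def unravelWith {α : Type u} (carry : ℕ → List ℕ) (u : ℕ → α) (ρ : ERule α) :
    List (ERule α) :=
  (List.range (ρ.conds.length + 1)).map (fun j =>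
    ⟨ if j = 0 then ρ.lhs else mkU (u (j-1)) (ρ.conds.getD (j-1) junkPair).2 (carry (j-1)),
      if j < ρ.conds.length then mkU (u j) (ρ.conds.getD j junkPair).1 (carry j) else ρ.rhs,
      [] ⟩)

/-- Ohlebusch's unraveling `U` of a single rule (carrying `X⃗ᵢ`). -/
def unravelU {α : Type u} (u : ℕ → α) (ρ : ERule α) : List (ERule α) :=
  unravelWith (fun j => seqOf (ρ.Xset j)) u ρ

/-- The optimized unraveling `U_opt` of a single rule (carrying `Z⃗ᵢ`). -/
def unravelOpt {α : Type u} (u : ℕ → α) (ρ : ERule α) : List (ERule α) :=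
  unravelWith (fun j => seqOf (ρ.Zset j)) u ρ

/-- `U(R)`. -/
def USys {α : Type u} (u : ERule α → ℕ → α) (R : Set (ERule α)) : Set (ERule α) :=
  { q | ∃ ρ ∈ R, q ∈ unravelU (u ρ) ρ }

/-- `U_opt(R)`. -/
def UoptSys {α : Type u} (u : ERule α → ℕ → α) (R : Set (ERule α)) : Set (ERule α) :=
  { q | ∃ ρ ∈ R, q ∈ unravelOpt (u ρ) ρ }

/-- The U symbols introduced for the rules of `R`. -/
def USymbols {α : Type u} (u : ERule α → ℕ → α) (R : Set (ERule α)) : Set α :=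
  { a | ∃ ρ ∈ R, ∃ i < ρ.conds.length, a = u ρ i }

/-- Freshness of the U symbols: they do not occur in `F` and are pairwise distinct. -/
def UFresh {α : Type u} (F : Set α) (u : ERule α → ℕ → α) (R : Set (ERule α)) : Prop :=
  (∀ ρ ∈ R, ∀ i < ρ.conds.length, u ρ i ∉ F) ∧
  (∀ ρ ∈ R, ∀ ρ' ∈ R, ∀ i < ρ.conds.length, ∀ j < ρ'.conds.length,
      u ρ i = u ρ' j → ρ = ρ' ∧ i = j)

/-! ## Positions, parallel reduction, EV-safe reduction -/

abbrev Pos := List ℕ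

/-- Subterm at a position. -/
def Term.sub? {α : Type u} : Pos → Term α → Option (Term α)
  | [], t => some t
  | _ :: _, .var _ => none
  | i :: p, .app _ ts => (ts[i]?).bind (Term.sub? p)

/-- Replacing the subterm at a position by `w`. -/
def Term.replaceAt {α : Type u} (w : Term α) : Pos → Term α → Term α
  | [], _ => w
  | _ :: _, .var x => .var x
  | i :: p, .app f ts =>
      .app f (ts.mapIdx (fun j s => if j = i then Term.replaceAt w p s else s))

/-- `Pos_F(t)`: non-variable positions of `t`. -/
def PosF {α : Type u} (t : Term α) : Set Pos :=
  { p | ∃ f ts, Term.sub? p t = some (Term.app f ts) }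

/-- `Pos_V(t)`: variable positions of `t`. -/
def PosV {α : Type u} (t : Term α) : Set Pos :=
  { p | ∃ x, Term.sub? p t = some (Term.var x) }

/-- One rewrite step of an eTRS at position `p`. -/
def RedAt {α : Type u} (R : Set (ERule α)) (p : Pos) (s t : Term α) : Prop :=
  ∃ ρ ∈ R, ρ.conds = [] ∧ ∃ σ : ℕ → Term α,
    Term.sub? p s = some (ρ.lhs.subst σ) ∧ t = Term.replaceAt (ρ.rhs.subst σ) p s

/-- Two positions are parallel. -/
def ParallelPos (p q : Pos) : Prop := ¬ p <+: q ∧ ¬ q <+: p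

/-- A sequence of single steps at the listed positions. -/
inductive RedSeqAt {α : Type u} (R : Set (ERule α)) : List Pos → Term α → Term α → Prop
  | nil (t : Term α) : RedSeqAt R [] t t
  | cons {ps s s' t} (p : Pos) : RedAt R p s s' → RedSeqAt R ps s' t →
      RedSeqAt R (p :: ps) s t

/-- One parallel rewrite step contracting the (pairwise parallel) positions in `P`. -/
def ParStep {α : Type u} (R : Set (ERule α)) (P : List Pos) (s t : Term α) : Prop :=
  P.Pairwise ParallelPos ∧ RedSeqAt R P s t

/-- The parallel reduction `⇉_R`. -/
def ParRed {α : Type u} (R : Set (ERule α)) (s t : Term α) : Prop :=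
  ∃ P, ParStep R P s t

/-- Parallel reduction where every contracted position is at or below a position of `Q`. -/
def ParRedBelow {α : Type u} (R : Set (ERule α)) (Q : Set Pos) (s t : Term α) : Prop :=
  ∃ P, ParStep R P s t ∧ ∀ p ∈ P, ∃ q ∈ Q, q <+: p

/-- `n`-fold composition of a relation. -/
def NFold {β : Type*} (r : β → β → Prop) : ℕ → β → β → Prop
  | 0 => Eq
  | n + 1 => fun a c => ∃ b, r a b ∧ NFold r n b c

/-- The update of the set of basic positions w.r.t. extra variables after a rewrite step
at position `p` with rule `l → r`. -/
def nextB {α : Type u} (B : Set Pos) (p : Pos) (l r : Term α) : Set Pos :=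
  { q | q ∈ B ∧ ¬ p <+: q }
  ∪ { q | ∃ q' ∈ PosF r, q = p ++ q' }
  ∪ { q | ∃ pv p' q', pv ∈ PosV l ∧ Term.sub? pv l = Term.sub? p' r ∧
        (p ++ pv ++ q') ∈ B ∧ q = p ++ p' ++ q' }

/-- Reduction sequences of an eTRS based on a set `B` of positions w.r.t. extra
variables, where additionally every term substituted for an extra variable of the
applied rule satisfies `T` (EV-instantiation on `T`). -/
inductive EVSeq {α : Type u} (R : Set (ERule α)) (T : Term α → Prop) :
    Set Pos → Term α → Term α → Prop
  | refl (B : Set Pos) (t : Term α) : EVSeq R T B t t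
  | step {B : Set Pos} {s s' t : Term α} (p : Pos) (ρ : ERule α) (σ : ℕ → Term α) :
      ρ ∈ R → ρ.conds = [] →
      Term.sub? p s = some (ρ.lhs.subst σ) →
      s' = Term.replaceAt (ρ.rhs.subst σ) p s →
      p ∈ B →
      (∀ x ∈ ρ.extraVars, T (σ x)) →
      EVSeq R T (nextB B p ρ.lhs ρ.rhs) s' t →
      EVSeq R T B s t

/-- An EV-safe reduction sequence `s ↪*_R t`, EV-instantiated on `T`. -/
def EVSafeI {α : Type u} (R : Set (ERule α)) (T : Term α → Prop) (s t : Term α) : Prop :=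
  EVSeq R T (PosF s) s t

/-- An EV-safe reduction sequence `s ↪*_R t`. -/
def EVSafe {α : Type u} (R : Set (ERule α)) (s t : Term α) : Prop :=
  EVSeq R (fun _ => True) (PosF s) s t

/-! ## Tree homomorphisms -/

/-- Applying the tree homomorphism determined by `h` to a term:
`φ(f(t₁, …, t_n)) = h(f){xᵢ ↦ φ(tᵢ)}` (the formal variable `xᵢ` is the variable `i - 1`). -/
def applyHom {α : Type u} (h : α → Term α) : Term α → Term α
  | .var x => .var x
  | .app f ts =>
      Term.subst (fun i => (ts.attach.map (fun s => applyHom h s.1)).getD i (Term.var i)) (h f)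
decreasing_by
  simp only [Term.app.sizeOf_spec]
  have := List.sizeOf_lt_of_mem s.2
  omega

/-- The image of a rule under a tree homomorphism. -/
def homRule {α : Type u} (h : α → Term α) (ρ : ERule α) : ERule α :=
  ⟨applyHom h ρ.lhs, applyHom h ρ.rhs,
    ρ.conds.map (fun c => (applyHom h c.1, applyHom h c.2))⟩

/-- The image of an eCTRS under a tree homomorphism. -/
def homSys {α : Type u} (h : α → Term α) (R : Set (ERule α)) : Set (ERule α) :=
  homRule h '' R

/-- `h` determines a tree homomorphism from `T(G₁,V)` to `T(G₂,V)` (w.r.t. arity `ar`):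
for `f ∈ G₁` of arity `n`, `h f` is a term over `G₂` with variables among `x₁, …, x_n`. -/
def TreeHom {α : Type u} (ar : α → ℕ) (G₁ G₂ : Set α) (h : α → Term α) : Prop :=
  ∀ f ∈ G₁, (h f).overSig G₂ ∧ ∀ x ∈ (h f).varList, x < ar f

/-- `F`-identical tree homomorphism. -/
def FIdentical {α : Type u} (ar : α → ℕ) (F : Set α) (h : α → Term α) : Prop :=
  ∀ f ∈ F, h f = Term.app f ((List.range (ar f)).map Term.var)

/-- Non-erasing tree homomorphism (on the signature `G`). -/
def HomNonErasing {α : Type u} (ar : α → ℕ) (G : Set α) (h : α → Term α) : Prop :=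
  ∀ f ∈ G, (h f).varFinset = Finset.range (ar f)

/-- The homomorphism is EV-preserving for the eTRS `S`. -/
def EVPreserving {α : Type u} (h : α → Term α) (S : Set (ERule α)) : Prop :=
  ∀ ρ ∈ S, (homRule h ρ).extraVars = ρ.extraVars

/-! ## Unravelings for join and normal CTRSs, and `Norm` -/

/-- Marchiori-style unraveling `U_J` of a join conditional rule. -/
def unravelJ {α : Type u} (uj : ERule α → α) (ρ : ERule α) : List (ERule α) :=
  if ρ.conds.isEmpty then [ρ]
  else
    [ ⟨ρ.lhs,
        Term.app (uj ρ) ((ρ.conds.foldr (fun c acc => c.1 :: c.2 :: acc) []) ++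
          (seqOf ρ.lhs.varFinset).map Term.var), []⟩,
      ⟨Term.app (uj ρ)
          (((List.range ρ.conds.length).foldr
              (fun j acc => Term.var (ρ.freshBase + j) :: Term.var (ρ.freshBase + j) :: acc) []) ++
            (seqOf ρ.lhs.varFinset).map Term.var),
        ρ.rhs, []⟩ ]

def UJSys {α : Type u} (uj : ERule α → α) (R : Set (ERule α)) : Set (ERule α) :=
  { q | ∃ ρ ∈ R, q ∈ unravelJ uj ρ }

/-- Unraveling `U_N` of a normal conditional rule. -/
def unravelN {α : Type u} (un : ERule α → α) (ρ : ERule α) : List (ERule α) :=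
  if ρ.conds.isEmpty then [ρ]
  else
    [ ⟨ρ.lhs,
        Term.app (un ρ) (ρ.conds.map Prod.fst ++ (seqOf ρ.lhs.varFinset).map Term.var), []⟩,
      ⟨Term.app (un ρ) (ρ.conds.map Prod.snd ++ (seqOf ρ.lhs.varFinset).map Term.var),
        ρ.rhs, []⟩ ]

def UNSys {α : Type u} (un : ERule α → α) (R : Set (ERule α)) : Set (ERule α) :=
  { q | ∃ ρ ∈ R, q ∈ unravelN un ρ }

/-- `Norm` on rules: `l → r ⇐ eq(s₁,t₁) ↠ eq(⊤,⊤); …; eq(s_k,t_k) ↠ eq(⊤,⊤)`. -/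
def normRule {α : Type u} (eqS topS : α) (ρ : ERule α) : ERule α :=
  ⟨ρ.lhs, ρ.rhs,
    ρ.conds.map (fun c =>
      (Term.app eqS [c.1, c.2], Term.app eqS [Term.app topS [], Term.app topS []]))⟩

/-- `Norm(R) = {eq(x,x) → eq(⊤,⊤)} ∪ {Norm(ρ) | ρ ∈ R}`. -/
def NormSys {α : Type u} (eqS topS : α) (R : Set (ERule α)) : Set (ERule α) :=
  insert
    ⟨Term.app eqS [Term.var 0, Term.var 0],
      Term.app eqS [Term.app topS [], Term.app topS []], []⟩
    (normRule eqS topS '' R)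

/-- A normal CTRS: a deterministic, non-LV CTRS all of whose condition right-hand
sides are ground normal forms w.r.t. `R_u`. -/
def NormalCTRS {α : Type u} (R : Set (ERule α)) : Prop :=
  ∀ ρ ∈ R, ρ.Det ∧ ρ.nonLV ∧ ∀ c ∈ ρ.conds, c.2.Ground ∧ IsNF (Ru R) c.2


/-!
Each term `m` of an EV-safe `U_opt(R)`-sequence, with its set `B` of basic positions, is related
to an `R`-reduct of the start term by the invariant `Sim`. A U symbol `U^ρ_i` at a basic position
records a pending application of `ρ`: a matcher `δ` of its left-hand side under which the first
`i` conditions already hold. Left-linearity of the unraveled rules lets the matcher of a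
simulated redex be assembled from independent matchers of its variable occurrences, and the
variables of `Z_i` are exactly those of `X_i` that are still needed, so every variable of the
next stage is carried along, bound by matching `t_i`, or an extra variable. Terms substituted
for extra variables sit below non-basic positions, where U symbols count as ordinary symbols
and, by EV-safety, no step happens. As the final term is an `F`-term, no application is pending
there, and the invariant yields `s →*_R t`.
-/

namespace Term

variable {α : Type u}

theorem induction_on {P : Term α → Prop} (t : Term α) (var : ∀ x, P (.var x))
    (app : ∀ f ts, (∀ s ∈ ts, P s) → P (.app f ts)) : P t := by
  induction t using varList.induct with
  | case1 x => exact var x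
  | case2 f ts ih => exact app f ts fun s hs => ih ⟨s, hs⟩

@[simp] theorem subst_var (σ : ℕ → Term α) (x : ℕ) : (var x).subst σ = σ x := by
  rw [subst]

theorem subst_app (σ : ℕ → Term α) (f : α) (ts : List (Term α)) :
    (app f ts).subst σ = app f (ts.map (subst σ)) := by
  rw [subst]
  simp

theorem varList_app (f : α) (ts : List (Term α)) :
    (app f ts).varList = (ts.map varList).flatten := by
  rw [varList, List.foldr_attach (f := fun t acc => varList t ++ acc)]
  induction ts <;> simp_all

theorem mem_varFinset_app {f : α} {ts : List (Term α)} {x : ℕ} :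
    x ∈ (app f ts).varFinset ↔ ∃ t ∈ ts, x ∈ t.varFinset := by
  simp [varFinset, varList_app]

@[simp] theorem mem_varFinset_var {x y : ℕ} : x ∈ (var y : Term α).varFinset ↔ x = y := by
  simp [varFinset, varList]

theorem subst_congr {σ σ' : ℕ → Term α} {t : Term α}
    (h : ∀ x ∈ t.varFinset, σ x = σ' x) : t.subst σ = t.subst σ' := by
  induction t using induction_on with
  | var x => simpa using h x (by simp)
  | app f ts ih =>
    rw [subst_app, subst_app, List.map_congr_left fun s hs =>
      ih s hs fun x hx => h x (mem_varFinset_app.2 ⟨s, hs, hx⟩)]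

theorem apps_app (f : α) (ts : List (Term α)) :
    (app f ts).apps = (f, ts.length) :: (ts.map apps).flatten := by
  rw [apps, List.foldr_attach (f := fun t acc => apps t ++ acc)]
  congr 1
  induction ts <;> simp_all

theorem overSig_app {F : Set α} {f : α} {ts : List (Term α)} :
    (app f ts).overSig F ↔ f ∈ F ∧ ∀ t ∈ ts, t.overSig F := by
  simp only [overSig, apps_app, List.mem_cons, List.mem_flatten, List.mem_map]
  constructor
  · intro h
    exact ⟨h _ (Or.inl rfl), fun t ht p hp => h p (Or.inr ⟨_, ⟨t, ht, rfl⟩, hp⟩)⟩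
  · rintro ⟨hf, h⟩ p (rfl | ⟨_, ⟨t, ht, rfl⟩, hp⟩)
    exacts [hf, h t ht p hp]

theorem Linear.of_mem {f : α} {ts : List (Term α)} (h : (app f ts).Linear) {t : Term α}
    (ht : t ∈ ts) : t.Linear := by
  rw [Linear, varList_app, List.nodup_flatten] at h
  exact h.1 _ (List.mem_map_of_mem ht)

theorem Linear.not_mem_of_ne {f : α} {ts : List (Term α)} (h : (app f ts).Linear)
    {i j : ℕ} (hi : i < ts.length) (hj : j < ts.length) (hij : i ≠ j) {x : ℕ}
    (hxi : x ∈ ts[i].varFinset) : x ∉ ts[j].varFinset := by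
  rw [Linear, varList_app, List.nodup_flatten, List.pairwise_map,
    List.pairwise_iff_getElem] at h
  simp only [varFinset, List.mem_toFinset] at hxi ⊢
  intro hxj
  rcases Nat.lt_or_gt_of_ne hij with hlt | hlt
  · exact h.2 i j hi hj hlt hxi hxj
  · exact h.2 j i hj hi hlt hxj hxi

@[simp] theorem sub?_nil (t : Term α) : sub? [] t = some t := rfl

@[simp] theorem sub?_cons_var (i : ℕ) (p : Pos) (x : ℕ) : sub? (i :: p) (var x : Term α) = none :=
  rfl

theorem sub?_cons_app (i : ℕ) (p : Pos) (f : α) (ts : List (Term α)) :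
    sub? (i :: p) (app f ts) = ts[i]?.bind (sub? p) := rfl

theorem sub?_append (p q : Pos) (t : Term α) :
    sub? (p ++ q) t = (sub? p t).bind (sub? q) := by
  induction p generalizing t with
  | nil => rfl
  | cons i p ih =>
    cases t with
    | var x => rfl
    | app f ts =>
      rw [List.cons_append, sub?_cons_app, sub?_cons_app]
      cases ts[i]? <;> simp [ih]

theorem replaceAt_cons_app (w : Term α) (i : ℕ) (p : Pos) (f : α) (ts : List (Term α)) :
    replaceAt w (i :: p) (app f ts) =
      app f (ts.mapIdx fun j s => if j = i then replaceAt w p s else s) := rfl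

theorem sub?_cons_eq_some {i : ℕ} {p : Pos} {t s : Term α} (h : sub? (i :: p) t = some s) :
    ∃ f ts, t = app f ts ∧ ∃ ti, ts[i]? = some ti ∧ sub? p ti = some s := by
  cases t with
  | var x => cases h
  | app f ts =>
    rw [sub?_cons_app, Option.bind_eq_some_iff] at h
    exact ⟨f, ts, rfl, h⟩

theorem mem_varFinset_of_sub? {t : Term α} {p : Pos} {x : ℕ}
    (h : sub? p t = some (var x)) : x ∈ t.varFinset := by
  induction t using induction_on generalizing p with
  | var y => cases p <;> simp_all
  | app f ts ih =>
    cases p with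
    | nil => cases h
    | cons i p =>
      obtain ⟨_, _, ⟨⟩, s, hs, hp⟩ := sub?_cons_eq_some h
      exact mem_varFinset_app.2 ⟨s, List.mem_of_getElem? hs, ih s (List.mem_of_getElem? hs) hp⟩

theorem exists_sub?_of_mem_varFinset {t : Term α} {x : ℕ} (h : x ∈ t.varFinset) :
    ∃ p, sub? p t = some (var x) := by
  induction t using induction_on with
  | var y => exact ⟨[], by simp_all⟩
  | app f ts ih =>
    obtain ⟨s, hs, hx⟩ := mem_varFinset_app.1 h
    obtain ⟨p, hp⟩ := ih s hs hx
    obtain ⟨i, hi, rfl⟩ := List.getElem_of_mem hs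
    exact ⟨i :: p, by rw [sub?_cons_app, List.getElem?_eq_getElem hi]; exact hp⟩

theorem eq_of_prefix_of_sub?_eq_var {t s : Term α} {p q : Pos} {x : ℕ}
    (hp : sub? p t = some (var x)) (hq : sub? q t = some s) (hpq : p <+: q) : p = q := by
  obtain ⟨_ | ⟨i, d⟩, rfl⟩ := hpq
  · simp
  · rw [sub?_append, hp] at hq
    cases hq

theorem Linear.eq_of_sub?_eq_var {t : Term α} (hl : t.Linear) {p q : Pos} {x : ℕ}
    (hp : sub? p t = some (var x)) (hq : sub? q t = some (var x)) : p = q := by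
  induction t using induction_on generalizing p q with
  | var y => cases p <;> cases q <;> simp_all
  | app f ts ih =>
    cases p with
    | nil => cases hp
    | cons i p =>
      cases q with
      | nil => cases hq
      | cons j q =>
        obtain ⟨_, _, ⟨⟩, s, hs, hp⟩ := sub?_cons_eq_some hp
        obtain ⟨_, _, ⟨⟩, s', hs', hq⟩ := sub?_cons_eq_some hq
        obtain ⟨hi, rfl⟩ := List.getElem?_eq_some_iff.1 hs
        obtain ⟨hj, rfl⟩ := List.getElem?_eq_some_iff.1 hs'
        by_cases hij : i = j
        · subst hij
          rw [ih _ (List.getElem_mem hi) (hl.of_mem (List.getElem_mem hi)) hp hq]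
        · exact absurd (mem_varFinset_of_sub? hq)
            (hl.not_mem_of_ne hi hj hij (mem_varFinset_of_sub? hp))

theorem Linear.exists_subst_eq {f : α} {ls : List (Term α)} (hlin : (app f ls).Linear)
    (μs : Fin ls.length → ℕ → Term α) (ν : ℕ → Term α) :
    ∃ μ : ℕ → Term α, (∀ (i : Fin ls.length), ∀ x ∈ ls[(i : ℕ)].varFinset, μ x = μs i x) ∧
      ∀ x ∉ (app f ls).varFinset, μ x = ν x := by
  classical
  refine ⟨fun x => if h : ∃ i : Fin ls.length, x ∈ ls[(i : ℕ)].varFinset then μs h.choose x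
    else ν x, fun i x hx => ?_, fun x hx => dif_neg fun ⟨i, hi⟩ => hx ?_⟩
  · have h : ∃ i : Fin ls.length, x ∈ ls[(i : ℕ)].varFinset := ⟨i, hx⟩
    simp only [dif_pos h]
    congr
    by_contra hne
    exact hlin.not_mem_of_ne h.choose.2 i.2 (fun h' => hne (Fin.ext h')) h.choose_spec hx
  · exact mem_varFinset_app.2 ⟨_, List.getElem_mem _, hi⟩

end Term

section Reduction

variable {α : Type u} {R : Set (ERule α)}

def Ctx.comp : Ctx α → Ctx α → Ctx α
  | .hole, C => C
  | .app f pre c post, C => .app f pre (c.comp C) post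

theorem Ctx.plug_comp (C C' : Ctx α) (t : Term α) : (C.comp C').plug t = C.plug (C'.plug t) := by
  induction C with
  | hole => rfl
  | app f pre c post ih => simp [comp, plug, ih]

theorem RedN.plug {n : ℕ} {s t : Term α} (C : Ctx α) (h : RedN R n s t) :
    RedN R n (C.plug s) (C.plug t) := by
  induction n with
  | zero => exact h.elim
  | succ n ih =>
    rcases h with h | ⟨ρ, hρ, C', σ, rfl, rfl, hc⟩
    · exact Or.inl (ih h)
    · exact Or.inr ⟨ρ, hρ, C.comp C', σ, (C.plug_comp ..).symm, (C.plug_comp ..).symm, hc⟩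

theorem RedStar.plug {s t : Term α} (C : Ctx α) (h : RedStar R s t) :
    RedStar R (C.plug s) (C.plug t) :=
  h.lift C.plug fun _ _ ⟨n, h⟩ => ⟨n, h.plug C⟩

theorem RedStar.app_append (f : α) (pre : List (Term α)) {ms as : List (Term α)}
    (h : List.Forall₂ (RedStar R) ms as) :
    RedStar R (.app f (pre ++ ms)) (.app f (pre ++ as)) := by
  induction h generalizing pre with
  | nil => exact .refl
  | @cons m a ms as hma _ ih =>
    refine (hma.plug (.app f pre .hole ms)).trans ?_
    simpa [Ctx.plug, RedStar] using ih (pre ++ [a])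

theorem RedStar.app (f : α) {ms as : List (Term α)} (hlen : ms.length = as.length)
    (h : ∀ (i : ℕ) (x y : Term α), ms[i]? = some x → as[i]? = some y → RedStar R x y) :
    RedStar R (.app f ms) (.app f as) := by
  refine RedStar.app_append f [] (List.forall₂_iff_get.2 ⟨hlen, fun i h₁ h₂ => ?_⟩)
  exact h i _ _ (List.getElem?_eq_getElem h₁) (List.getElem?_eq_getElem h₂)

theorem RedN.mono {m n : ℕ} (h : m ≤ n) {s t : Term α} (hst : RedN R m s t) : RedN R n s t := by
  induction h with
  | refl => exact hst
  | step _ ih => exact Or.inl ih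

theorem RedStar.exists_redN {s t : Term α} (h : RedStar R s t) :
    ∃ n, Relation.ReflTransGen (RedN R n) s t := by
  induction h with
  | refl => exact ⟨0, .refl⟩
  | tail _ hr ih =>
    obtain ⟨n, hn⟩ := ih
    obtain ⟨m, hm⟩ := hr
    exact ⟨max n m,
      (Relation.ReflTransGen.mono (fun _ _ => RedN.mono (le_max_left n m)) _ _ hn).tail
        (hm.mono (le_max_right n m))⟩

theorem exists_redN_of_forall_redStar (L : List (Term α × Term α))
    (h : ∀ c ∈ L, RedStar R c.1 c.2) :
    ∃ n, ∀ c ∈ L, Relation.ReflTransGen (RedN R n) c.1 c.2 := by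
  induction L with
  | nil => exact ⟨0, by simp⟩
  | cons c L ih =>
    obtain ⟨n, hn⟩ := ih fun c hc => h c (List.mem_cons_of_mem _ hc)
    obtain ⟨m, hm⟩ := (h c List.mem_cons_self).exists_redN
    refine ⟨max n m, fun d hd => ?_⟩
    rcases List.mem_cons.1 hd with rfl | hd
    · exact Relation.ReflTransGen.mono (fun _ _ => RedN.mono (le_max_right n m)) _ _ hm
    · exact Relation.ReflTransGen.mono (fun _ _ => RedN.mono (le_max_left n m)) _ _ (hn d hd)

theorem red_of_conds {ρ : ERule α} (hρ : ρ ∈ R) (δ : ℕ → Term α)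
    (hc : ∀ c ∈ ρ.conds, RedStar R (c.1.subst δ) (c.2.subst δ)) :
    Red R (ρ.lhs.subst δ) (ρ.rhs.subst δ) := by
  obtain ⟨n, hn⟩ := exists_redN_of_forall_redStar (ρ.conds.map fun c => (c.1.subst δ, c.2.subst δ))
    fun _ hd => by obtain ⟨c, hc', rfl⟩ := List.mem_map.1 hd; exact hc c hc'
  exact ⟨n + 1, Or.inr ⟨ρ, hρ, .hole, δ, rfl, rfl, fun c hc => hn _ (List.mem_map_of_mem hc)⟩⟩

end Reduction

theorem mem_foldr_union_map {β : Type*} {g : β → Finset ℕ} {L : List β} {x : ℕ} :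
    x ∈ (L.map g).foldr (· ∪ ·) ∅ ↔ ∃ c ∈ L, x ∈ g c := by
  induction L with
  | nil => simp
  | cons c L ih => simp [ih]

namespace ERule

variable {α : Type u} (ρ : ERule α)

def condLhs (j : ℕ) : Term α := (ρ.conds.getD j junkPair).1

def condRhs (j : ℕ) : Term α := (ρ.conds.getD j junkPair).2

variable {ρ}

theorem condLhs_eq {j : ℕ} (hj : j < ρ.conds.length) : ρ.condLhs j = ρ.conds[j].1 :=
  congrArg _ (List.getD_eq_getElem _ _ hj)

theorem condRhs_eq {j : ℕ} (hj : j < ρ.conds.length) : ρ.condRhs j = ρ.conds[j].2 :=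
  congrArg _ (List.getD_eq_getElem _ _ hj)

theorem overSig.condLhs {F : Set α} (h : ρ.overSig F) {j : ℕ} (hj : j < ρ.conds.length) :
    (ρ.condLhs j).overSig F :=
  condLhs_eq hj ▸ (h.2.2 _ (List.getElem_mem hj)).1

theorem overSig.condRhs {F : Set α} (h : ρ.overSig F) {j : ℕ} (hj : j < ρ.conds.length) :
    (ρ.condRhs j).overSig F :=
  condRhs_eq hj ▸ (h.2.2 _ (List.getElem_mem hj)).2

theorem mem_Xset {j x : ℕ} :
    x ∈ ρ.Xset j ↔ x ∈ ρ.lhs.varFinset ∨ ∃ c ∈ ρ.conds.take j, x ∈ c.2.varFinset := by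
  simp only [Xset, Finset.mem_union, mem_foldr_union_map]

theorem lhs_subset_Xset (j : ℕ) : ρ.lhs.varFinset ⊆ ρ.Xset j :=
  fun _ hx => mem_Xset.2 (Or.inl hx)

theorem Xset_mono : Monotone ρ.Xset := by
  intro j j' h x hx
  refine mem_Xset.2 ((mem_Xset.1 hx).imp_right fun ⟨c, hc, hx⟩ => ⟨c, ?_, hx⟩)
  exact (List.take_prefix_take_left h).subset hc

theorem condRhs_subset_Xset_succ {j : ℕ} (hj : j < ρ.conds.length) :
    (ρ.condRhs j).varFinset ⊆ ρ.Xset (j + 1) := by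
  intro x hx
  rw [condRhs_eq hj] at hx
  refine mem_Xset.2 (Or.inr ⟨_, ?_, hx⟩)
  have hmem := List.getElem_mem (l := ρ.conds.take (j + 1)) (n := j) (by simp [hj])
  rwa [List.getElem_take] at hmem

theorem mem_Yset {j x : ℕ} :
    x ∈ ρ.Yset j ↔ x ∈ ρ.rhs.varFinset ∨ x ∈ (ρ.condRhs j).varFinset ∨
      ∃ c ∈ ρ.conds.drop (j + 1), x ∈ c.1.varFinset ∨ x ∈ c.2.varFinset := by
  simp only [Yset, condRhs, Finset.mem_union, mem_foldr_union_map, or_assoc]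

theorem rhs_subset_Yset (j : ℕ) : ρ.rhs.varFinset ⊆ ρ.Yset j :=
  fun _ hx => mem_Yset.2 (Or.inl hx)

theorem condRhs_subset_Yset (j : ℕ) : (ρ.condRhs j).varFinset ⊆ ρ.Yset j :=
  fun _ hx => mem_Yset.2 (Or.inr (Or.inl hx))

theorem mem_Yset_of_mem_cond_succ {j x : ℕ} (hj : j + 1 < ρ.conds.length)
    (hx : x ∈ (ρ.condLhs (j + 1)).varFinset ∨ x ∈ (ρ.condRhs (j + 1)).varFinset) :
    x ∈ ρ.Yset j := by
  refine mem_Yset.2 (Or.inr (Or.inr ⟨_, ?_, hx⟩))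
  rw [List.getD_eq_getElem _ _ hj, List.drop_eq_getElem_cons hj]
  exact List.mem_cons_self

theorem Yset_succ_subset {j : ℕ} (hj : j + 1 < ρ.conds.length) : ρ.Yset (j + 1) ⊆ ρ.Yset j := by
  intro x hx
  rcases mem_Yset.1 hx with hx | hx | ⟨c, hc, hx⟩
  · exact rhs_subset_Yset j hx
  · exact mem_Yset_of_mem_cond_succ hj (Or.inr hx)
  · refine mem_Yset.2 (Or.inr (Or.inr ⟨c, ?_, hx⟩))
    rw [List.drop_eq_getElem_cons hj]
    exact List.mem_cons_of_mem _ hc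

theorem Zset_subset_Xset (j : ℕ) : ρ.Zset j ⊆ ρ.Xset j := Finset.inter_subset_left

theorem mem_Zset {j x : ℕ} : x ∈ ρ.Zset j ↔ x ∈ ρ.Xset j ∧ x ∈ ρ.Yset j := Finset.mem_inter

end ERule

section Unraveling

variable {α : Type u}

theorem mem_seqOf {s : Finset ℕ} {x : ℕ} : x ∈ seqOf s ↔ x ∈ s := Finset.mem_sort _

theorem subst_mkU (σ : ℕ → Term α) (f : α) (t : Term α) (xs : List ℕ) :
    (mkU f t xs).subst σ = .app f (t.subst σ :: xs.map σ) := by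
  simp [mkU, Term.subst_app]

theorem mem_varFinset_mkU {f : α} {t : Term α} {xs : List ℕ} {x : ℕ} :
    x ∈ (mkU f t xs).varFinset ↔ x ∈ t.varFinset ∨ x ∈ xs := by
  simp [mkU, Term.mem_varFinset_app]

theorem Term.Linear.of_mkU {f : α} {t : Term α} {xs : List ℕ} (h : (mkU f t xs).Linear) :
    t.Linear ∧ ∀ x ∈ t.varFinset, x ∉ xs := by
  refine ⟨h.of_mem List.mem_cons_self, fun x hx hxs => ?_⟩
  obtain ⟨i, hi, rfl⟩ := List.getElem_of_mem hxs
  exact h.not_mem_of_ne (i := 0) (j := i + 1) (by simp) (by simpa using hi) (by omega) hx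
    (by simp)

theorem sub?_mkU_succ (f : α) (t : Term α) (xs : List ℕ) (j : ℕ) :
    (mkU f t xs).sub? [j + 1] = xs[j]?.map Term.var := by
  rw [mkU, Term.sub?_cons_app, List.getElem?_cons_succ, List.getElem?_map]
  cases xs[j]? <;> rfl

theorem sub?_mkU_eq_var {f : α} {t : Term α} {xs : List ℕ} {p : Pos} {x : ℕ}
    (h : (mkU f t xs).sub? p = some (.var x)) :
    (∃ p', p = 0 :: p' ∧ t.sub? p' = some (.var x)) ∨ (∃ j, p = [j + 1] ∧ xs[j]? = some x) := by
  match p, h with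
  | 0 :: p', h => exact Or.inl ⟨p', rfl, h⟩
  | (j + 1) :: p', h =>
    rw [mkU, Term.sub?_cons_app, List.getElem?_cons_succ, List.getElem?_map] at h
    cases hj : xs[j]? with
    | none => simp [hj] at h
    | some z =>
      cases p' with
      | nil => simp_all
      | cons _ _ => simp [hj] at h

def optLhs (u₀ : ℕ → α) (ρ : ERule α) (j : ℕ) : Term α :=
  if j = 0 then ρ.lhs else mkU (u₀ (j - 1)) (ρ.condRhs (j - 1)) (seqOf (ρ.Zset (j - 1)))

def optRhs (u₀ : ℕ → α) (ρ : ERule α) (j : ℕ) : Term α :=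
  if j < ρ.conds.length then mkU (u₀ j) (ρ.condLhs j) (seqOf (ρ.Zset j)) else ρ.rhs

theorem optLhs_succ (u₀ : ℕ → α) (ρ : ERule α) (j : ℕ) :
    optLhs u₀ ρ (j + 1) = mkU (u₀ j) (ρ.condRhs j) (seqOf (ρ.Zset j)) := rfl

theorem mem_unravelOpt {u₀ : ℕ → α} {ρ q : ERule α} :
    q ∈ unravelOpt u₀ ρ ↔ ∃ j ≤ ρ.conds.length, q = ⟨optLhs u₀ ρ j, optRhs u₀ ρ j, []⟩ := by
  simp only [unravelOpt, unravelWith, List.mem_map, List.mem_range, Nat.lt_succ_iff, eq_comm]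
  rfl

theorem varFinset_optRhs_succ_subset_Yset (u₀ : ℕ → α) (ρ : ERule α) (j : ℕ) :
    (optRhs u₀ ρ (j + 1)).varFinset ⊆ ρ.Yset j := by
  intro x hx
  unfold optRhs at hx
  split_ifs at hx with hj'
  · rcases mem_varFinset_mkU.1 hx with hx | hx
    · exact ERule.mem_Yset_of_mem_cond_succ hj' (Or.inl hx)
    · exact ERule.Yset_succ_subset hj' (ERule.mem_Zset.1 (mem_seqOf.1 hx)).2
  · exact ERule.rhs_subset_Yset j hx

end Unraveling

section BasicPositions

variable {α : Type u}

def posBelow (D : Set Pos) (p : Pos) : Set Pos := {q | p ++ q ∈ D}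

@[simp] theorem posBelow_nil (D : Set Pos) : posBelow D [] = D := rfl

theorem posBelow_mono {D D' : Set Pos} (h : D ⊆ D') (p : Pos) : posBelow D p ⊆ posBelow D' p :=
  fun _ hq => h hq

theorem mem_nextB {B : Set Pos} {p : Pos} {l r : Term α} {q : Pos} :
    q ∈ nextB B p l r ↔
      (q ∈ B ∧ ¬ p <+: q) ∨ (∃ q' ∈ PosF r, q = p ++ q') ∨
      (∃ pv p' q', pv ∈ PosV l ∧ l.sub? pv = r.sub? p' ∧ p ++ pv ++ q' ∈ B ∧
        q = p ++ p' ++ q') := by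
  simp only [nextB, Set.mem_union, Set.mem_ofPred_eq, or_assoc]

theorem posBelow_nextB_cons_of_ne {D : Set Pos} {i j : ℕ} {p : Pos} {l r : Term α} (hij : j ≠ i) :
    posBelow (nextB D (i :: p) l r) [j] ⊆ posBelow D [j] := by
  intro q hq
  rcases mem_nextB.1 hq with ⟨hD, _⟩ | ⟨_, _, heq⟩ | ⟨_, _, _, _, _, _, heq⟩
  · exact hD
  all_goals simp only [List.cons_append, List.nil_append, List.cons.injEq] at heq
  all_goals exact absurd heq.1 hij

theorem posBelow_nextB_cons_self {D : Set Pos} {i : ℕ} {p : Pos} {l r : Term α} :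
    posBelow (nextB D (i :: p) l r) [i] ⊆ nextB (posBelow D [i]) p l r := by
  intro q hq
  rcases mem_nextB.1 hq with ⟨hD, hnp⟩ | ⟨q', hq', heq⟩ | ⟨pv, p', q', h1, h2, h3, heq⟩
  · exact mem_nextB.2 (Or.inl ⟨hD, fun hpq => hnp (List.cons_prefix_cons.2 ⟨rfl, hpq⟩)⟩)
  · simp only [List.cons_append, List.nil_append, List.cons.injEq, true_and] at heq
    exact mem_nextB.2 (Or.inr (Or.inl ⟨q', hq', heq⟩))
  · simp only [List.cons_append, List.nil_append, List.cons.injEq, true_and] at heq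
    exact mem_nextB.2 (Or.inr (Or.inr ⟨pv, p', q', h1, h2, h3, heq⟩))

theorem nil_not_mem_nextB_cons {D : Set Pos} {i : ℕ} {p : Pos} {l r : Term α} (h : [] ∉ D) :
    [] ∉ nextB D (i :: p) l r := by
  intro hmem
  rcases mem_nextB.1 hmem with ⟨hD, _⟩ | ⟨_, _, heq⟩ | ⟨_, _, _, _, _, _, heq⟩
  · exact h hD
  all_goals simp at heq

theorem exists_of_mem_posBelow_nextB_nil {D : Set Pos} {l r : Term α} {p' q : Pos} {x : ℕ}
    (hp' : r.sub? p' = some (.var x)) (hq : q ∈ posBelow (nextB D [] l r) p') :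
    ∃ pv, l.sub? pv = some (.var x) ∧ q ∈ posBelow D pv := by
  rcases mem_nextB.1 hq with ⟨_, hnp⟩ | ⟨q', ⟨f, ts, hsub⟩, heq⟩ |
    ⟨pv, p'', q', ⟨y, hy⟩, h2, h3, heq⟩
  · exact absurd List.nil_prefix hnp
  · rw [List.nil_append] at heq
    rw [← heq, Term.sub?_append, hp'] at hsub
    cases q <;> cases hsub
  · simp only [List.nil_append] at heq h3
    have hp'' : r.sub? p'' = some (.var y) := by rw [← h2, hy]
    have hpp : p' = p'' := by
      rcases List.prefix_or_prefix_of_prefix (heq ▸ List.prefix_append p' q)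
        (List.prefix_append p'' q') with h | h
      · exact Term.eq_of_prefix_of_sub?_eq_var hp' hp'' h
      · exact (Term.eq_of_prefix_of_sub?_eq_var hp'' hp' h).symm
    subst hpp
    obtain rfl := List.append_cancel_left heq
    obtain rfl : x = y := by simpa using hp'.symm.trans hp''
    exact ⟨pv, hy, h3⟩

end BasicPositions

section Simulation

variable {α : Type u} {F : Set α} {R : Set (ERule α)} {u : ERule α → ℕ → α}

/-- `Sim R u D m a`: `a` reduces in `R` to a term that `m` simulates. Outside the basic
positions `D` a U symbol counts as an ordinary symbol; at a basic position `U^ρ_i` stands for a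
pending application of `ρ`: a substitution `δ` with `a →* lδ` under which the first `i`
conditions hold, and whose values on `Z_i` are simulated by the carried arguments. -/
inductive Sim (R : Set (ERule α)) (u : ERule α → ℕ → α) : Set Pos → Term α → Term α → Prop
  | var (D : Set Pos) (x : ℕ) (a : Term α) : RedStar R a (.var x) → Sim R u D (.var x) a
  | node (D : Set Pos) (f : α) (ms as : List (Term α)) (a : Term α) :
      (f ∉ USymbols u R ∨ [] ∉ D) → RedStar R a (.app f as) → ms.length = as.length →
      (∀ (i : ℕ) (x y : Term α), ms[i]? = some x → as[i]? = some y →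
        Sim R u (posBelow D [i]) x y) →
      Sim R u D (.app f ms) a
  | ublock (D : Set Pos) (ρ : ERule α) (i : ℕ) (w : Term α) (vs : List (Term α)) (a : Term α)
      (δ : ℕ → Term α) :
      ρ ∈ R → i < ρ.conds.length → vs.length = (seqOf (ρ.Zset i)).length →
      RedStar R a (ρ.lhs.subst δ) →
      (∀ j < i, RedStar R ((ρ.condLhs j).subst δ) ((ρ.condRhs j).subst δ)) →
      Sim R u (posBelow D [0]) w ((ρ.condLhs i).subst δ) →
      (∀ (j : ℕ) (x : Term α), vs[j]? = some x →
        Sim R u (posBelow D [j + 1]) x (δ ((seqOf (ρ.Zset i)).getD j 0))) →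
      Sim R u D (.app (u ρ i) (w :: vs)) a

namespace Sim

theorem of_redStar {D : Set Pos} {m a b : Term α} (hab : RedStar R a b) (h : Sim R u D m b) :
    Sim R u D m a := by
  cases h with
  | var _ x _ hr => exact .var D x a (hab.trans hr)
  | node _ f ms as _ hside hr hlen hch => exact .node D f ms as a hside (hab.trans hr) hlen hch
  | ublock _ ρ i w vs _ δ h₁ h₂ h₃ hr h₄ h₅ h₆ =>
    exact .ublock D ρ i w vs a δ h₁ h₂ h₃ (hab.trans hr) h₄ h₅ h₆

theorem mono {D D' : Set Pos} {m a : Term α} (h : Sim R u D m a) (hD : D' ⊆ D) :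
    Sim R u D' m a := by
  induction h generalizing D' with
  | var D x a hr => exact .var _ x a hr
  | node D f ms as a hside hr hlen _ ih =>
    exact .node D' f ms as a (hside.imp_right fun h hmem => h (hD hmem)) hr hlen
      fun i x y hx hy => ih i x y hx hy (posBelow_mono hD _)
  | ublock D ρ i w vs a δ h₁ h₂ h₃ h₄ h₅ _ _ ihw ihvs =>
    exact .ublock D' ρ i w vs a δ h₁ h₂ h₃ h₄ h₅ (ihw (posBelow_mono hD _))
      fun j x hx => ihvs j x hx (posBelow_mono hD _)

theorem self_of_empty (m : Term α) : Sim R u ∅ m m := by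
  induction m using Term.induction_on with
  | var x => exact .var _ x _ .refl
  | app f ts ih =>
    refine .node _ f ts ts _ (Or.inr id) .refl rfl fun i x y hx hy => ?_
    obtain rfl : x = y := Option.some_injective _ (hx.symm.trans hy)
    exact ih x (List.mem_of_getElem? hx)

theorem not_mem_USymbols (hfresh : UFresh F u R) {f : α} (hf : f ∈ F) : f ∉ USymbols u R := by
  rintro ⟨ρ, hρ, i, hi, rfl⟩
  exact hfresh.1 ρ hρ i hi hf

theorem self_of_overSig (hfresh : UFresh F u R) {t : Term α} (ht : t.overSig F) (D : Set Pos) :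
    Sim R u D t t := by
  induction t using Term.induction_on generalizing D with
  | var x => exact .var _ x _ .refl
  | app f ts ih =>
    obtain ⟨hf, hts⟩ := Term.overSig_app.1 ht
    refine .node _ f ts ts _ (Or.inl (not_mem_USymbols hfresh hf)) .refl rfl
      fun i x y hx hy => ?_
    obtain rfl : x = y := Option.some_injective _ (hx.symm.trans hy)
    exact ih x (List.mem_of_getElem? hx) (hts x (List.mem_of_getElem? hx)) _

theorem redStar_of_overSig (hfresh : UFresh F u R) {t : Term α} (ht : t.overSig F)
    {D : Set Pos} {a : Term α} (h : Sim R u D t a) : RedStar R a t := by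
  induction t using Term.induction_on generalizing D a with
  | var x => cases h with
    | var _ _ _ hr => exact hr
  | app f ts ih =>
    obtain ⟨hf, hts⟩ := Term.overSig_app.1 ht
    cases h with
    | node _ _ _ as _ _ hr hlen hch =>
      refine hr.trans (RedStar.app f hlen.symm fun i x y hx hy => ?_)
      have hy' := List.mem_of_getElem? hy
      exact ih y hy' (hts y hy') (hch i y x hy hx)
    | ublock _ ρ i _ _ _ _ hρ hi => exact absurd hf (hfresh.1 ρ hρ i hi)

theorem app_inv {D : Set Pos} {f : α} {ms : List (Term α)} {a : Term α}
    (h : Sim R u D (.app f ms) a) :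
    (∃ as, (f ∉ USymbols u R ∨ [] ∉ D) ∧ RedStar R a (.app f as) ∧ ms.length = as.length ∧
      ∀ (i : ℕ) (x y : Term α), ms[i]? = some x → as[i]? = some y →
        Sim R u (posBelow D [i]) x y) ∨
    (∃ (ρ : ERule α) (i : ℕ) (w : Term α) (vs : List (Term α)) (δ : ℕ → Term α),
      ρ ∈ R ∧ i < ρ.conds.length ∧ f = u ρ i ∧ ms = w :: vs ∧
      vs.length = (seqOf (ρ.Zset i)).length ∧ RedStar R a (ρ.lhs.subst δ) ∧
      (∀ j < i, RedStar R ((ρ.condLhs j).subst δ) ((ρ.condRhs j).subst δ)) ∧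
      Sim R u (posBelow D [0]) w ((ρ.condLhs i).subst δ) ∧
      (∀ (j : ℕ) (x : Term α), vs[j]? = some x →
        Sim R u (posBelow D [j + 1]) x (δ ((seqOf (ρ.Zset i)).getD j 0)))) := by
  cases h with
  | node _ _ _ as _ hside hr hlen hch => exact Or.inl ⟨as, hside, hr, hlen, hch⟩
  | ublock _ ρ i w vs _ δ h₁ h₂ h₃ h₄ h₅ h₆ h₇ =>
    exact Or.inr ⟨ρ, i, w, vs, δ, h₁, h₂, rfl, rfl, h₃, h₄, h₅, h₆, h₇⟩

theorem exists_match (hfresh : UFresh F u R) {l : Term α} (hlin : l.Linear) (hl : l.overSig F)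
    {D : Set Pos} {a : Term α} {σ : ℕ → Term α} (h : Sim R u D (l.subst σ) a) :
    ∃ μ : ℕ → Term α, RedStar R a (l.subst μ) ∧
      (∀ (p : Pos) (x : ℕ), l.sub? p = some (.var x) → Sim R u (posBelow D p) (σ x) (μ x)) ∧
      ∀ x ∉ l.varFinset, μ x = σ x := by
  induction l using Term.induction_on generalizing D a with
  | var y =>
    refine ⟨Function.update σ y a, by simpa using .refl, fun p x hp => ?_,
      fun x hx => Function.update_of_ne (by simpa using hx) _ _⟩
    cases p with
    | nil => cases hp; simpa using h
    | cons _ _ => cases hp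
  | app f ls ih =>
    obtain ⟨hf, hls⟩ := Term.overSig_app.1 hl
    rw [Term.subst_app] at h
    obtain ⟨as, -, hred, hlen, hch⟩ : ∃ as, (f ∉ USymbols u R ∨ [] ∉ D) ∧
        RedStar R a (.app f as) ∧ (ls.map (Term.subst σ)).length = as.length ∧
        ∀ (i : ℕ) (x y : Term α), (ls.map (Term.subst σ))[i]? = some x → as[i]? = some y →
          Sim R u (posBelow D [i]) x y := by
      rcases h.app_inv with h | ⟨ρ, i, -, -, -, hρ, hi, rfl, -⟩
      · exact h
      · exact absurd hf (hfresh.1 ρ hρ i hi)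
    rw [List.length_map] at hlen
    have hchild : ∀ i : Fin ls.length, ∃ μ : ℕ → Term α,
        RedStar R as[i.1] (ls[(i : ℕ)].subst μ) ∧
        ∀ (p : Pos) (x : ℕ), ls[(i : ℕ)].sub? p = some (.var x) →
          Sim R u (posBelow (posBelow D [i]) p) (σ x) (μ x) := by
      intro i
      have hmem : ls[(i : ℕ)] ∈ ls := List.getElem_mem i.2
      obtain ⟨μ, hred, hocc, -⟩ := ih _ hmem (hlin.of_mem hmem) (hls _ hmem)
        (hch i _ _ (by simp) (List.getElem?_eq_getElem _))
      exact ⟨μ, hred, hocc⟩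
    choose μs hredμs hoccμs using hchild
    obtain ⟨μ, hμ, hμσ⟩ := hlin.exists_subst_eq μs σ
    refine ⟨μ, hred.trans ?_, fun p x hp => ?_, hμσ⟩
    · rw [Term.subst_app]
      refine RedStar.app f (by simpa using hlen.symm) fun i x y hx hy => ?_
      obtain ⟨hi, rfl⟩ := List.getElem?_eq_some_iff.1 hx
      have hi' : i < ls.length := hlen ▸ hi
      obtain rfl : y = ls[i].subst μ := by simpa [hi'] using hy.symm
      rw [Term.subst_congr (hμ ⟨i, hi'⟩)]
      exact hredμs ⟨i, hi'⟩
    · cases p with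
      | nil => cases hp
      | cons i p =>
        obtain ⟨_, _, ⟨⟩, s, hs, hp⟩ := Term.sub?_cons_eq_some hp
        obtain ⟨hi, rfl⟩ := List.getElem?_eq_some_iff.1 hs
        rw [hμ ⟨i, hi⟩ x (Term.mem_varFinset_of_sub? hp)]
        exact hoccμs ⟨i, hi⟩ p x hp

theorem subst (hfresh : UFresh F u R) {r : Term α} (hr : r.overSig F) {E : Set Pos}
    {ν ν' : ℕ → Term α}
    (h : ∀ (p : Pos) (x : ℕ), r.sub? p = some (.var x) → Sim R u (posBelow E p) (ν x) (ν' x)) :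
    Sim R u E (r.subst ν) (r.subst ν') := by
  induction r using Term.induction_on generalizing E with
  | var x => simpa using h [] x rfl
  | app f rs ih =>
    obtain ⟨hf, hrs⟩ := Term.overSig_app.1 hr
    rw [Term.subst_app, Term.subst_app]
    refine .node E f _ _ _ (Or.inl (not_mem_USymbols hfresh hf)) .refl (by simp)
      fun i x y hx hy => ?_
    rw [List.getElem?_map] at hx hy
    cases hs : rs[i]? with
    | none => simp [hs] at hx
    | some s =>
      simp only [hs, Option.map_some, Option.some.injEq] at hx hy
      subst hx hy
      exact ih s (List.mem_of_getElem? hs) (hrs s (List.mem_of_getElem? hs)) fun p x hp =>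
        h (i :: p) x (by rw [Term.sub?_cons_app, hs]; exact hp)

end Sim

end Simulation
namespace Sim

variable {α : Type u} {F : Set α} {R : Set (ERule α)} {u : ERule α → ℕ → α}

theorem posBelow_nextB_nil {D : Set Pos} {L Rr : Term α} {σ δ : ℕ → Term α} (hlin : L.Linear)
    (hocc : ∀ (p : Pos) (x : ℕ), L.sub? p = some (.var x) → Sim R u (posBelow D p) (σ x) (δ x))
    (hnew : ∀ x ∈ Rr.varFinset, x ∉ L.varFinset → δ x = σ x)
    {p : Pos} {x : ℕ} (hp : Rr.sub? p = some (.var x)) :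
    Sim R u (posBelow (nextB D [] L Rr) p) (σ x) (δ x) := by
  by_cases hx : x ∈ L.varFinset
  · obtain ⟨pv, hpv⟩ := Term.exists_sub?_of_mem_varFinset hx
    refine (hocc pv x hpv).mono fun q hq => ?_
    obtain ⟨pv', hpv', hq'⟩ := exists_of_mem_posBelow_nextB_nil hp hq
    rwa [hlin.eq_of_sub?_eq_var hpv' hpv] at hq'
  · rw [hnew x (Term.mem_varFinset_of_sub? hp) hx]
    refine (self_of_empty (σ x)).mono fun q hq => ?_
    obtain ⟨pv, hpv, -⟩ := exists_of_mem_posBelow_nextB_nil hp hq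
    exact absurd (Term.mem_varFinset_of_sub? hpv) hx

theorem subst_optRhs (hfresh : UFresh F u R) {ρ : ERule α} (hρ : ρ ∈ R) (hρF : ρ.overSig F)
    {j : ℕ} (hj : j ≤ ρ.conds.length) {E : Set Pos} {σ δ : ℕ → Term α} {a : Term α}
    (hred : RedStar R a (ρ.lhs.subst δ))
    (hconds : ∀ i < j, RedStar R ((ρ.condLhs i).subst δ) ((ρ.condRhs i).subst δ))
    (h : ∀ (p : Pos) (x : ℕ), (optRhs (u ρ) ρ j).sub? p = some (.var x) →
      Sim R u (posBelow E p) (σ x) (δ x)) :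
    Sim R u E ((optRhs (u ρ) ρ j).subst σ) a := by
  unfold optRhs at h ⊢
  split_ifs at h ⊢ with hjk
  · rw [subst_mkU]
    refine .ublock E ρ j _ _ a δ hρ hjk (by simp) hred hconds
      (subst hfresh (hρF.condLhs hjk) fun p x hp => h (0 :: p) x hp) fun k x hx => ?_
    rw [List.getElem?_map] at hx
    cases hz : (seqOf (ρ.Zset j))[k]? with
    | none => simp [hz] at hx
    | some z =>
      simp only [hz, Option.map_some, Option.some.injEq] at hx
      subst hx
      rw [List.getD_eq_getElem?_getD, hz, Option.getD_some]
      exact h [k + 1] z (by rw [sub?_mkU_succ, hz]; rfl)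
  · have hall : ∀ c ∈ ρ.conds, RedStar R (c.1.subst δ) (c.2.subst δ) := by
      intro c hc
      obtain ⟨i, hi, rfl⟩ := List.getElem_of_mem hc
      rw [← ERule.condLhs_eq hi, ← ERule.condRhs_eq hi]
      exact hconds i (by omega)
    exact of_redStar (hred.tail (red_of_conds hρ δ hall)) (subst hfresh hρF.2.1 h)

theorem ublock_inv (hfresh : UFresh F u R) {ρ : ERule α} (hρ : ρ ∈ R) {j : ℕ}
    (hj : j < ρ.conds.length) {D : Set Pos} (hD : [] ∈ D) {w : Term α} {vs : List (Term α)}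
    {a : Term α} (h : Sim R u D (.app (u ρ j) (w :: vs)) a) :
    ∃ δ : ℕ → Term α, RedStar R a (ρ.lhs.subst δ) ∧
      (∀ i < j, RedStar R ((ρ.condLhs i).subst δ) ((ρ.condRhs i).subst δ)) ∧
      Sim R u (posBelow D [0]) w ((ρ.condLhs j).subst δ) ∧
      ∀ (k : ℕ) (x : Term α), vs[k]? = some x →
        Sim R u (posBelow D [k + 1]) x (δ ((seqOf (ρ.Zset j)).getD k 0)) := by
  rcases h.app_inv with ⟨-, hside, -⟩ |
    ⟨ρ', i, w', vs', δ, hρ', hi, hu, hms, -, hred, hconds, hw, hvs⟩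
  · exact absurd hside (not_or.2 ⟨not_not.2 ⟨ρ, hρ, j, hj, rfl⟩, not_not.2 hD⟩)
  obtain ⟨rfl, rfl⟩ := hfresh.2 ρ hρ ρ' hρ' j hj i hi hu
  obtain ⟨rfl, rfl⟩ := List.cons.inj hms
  exact ⟨δ, hred, hconds, hw, hvs⟩

end Sim

section Stages

variable {α : Type u} {F : Set α} {R : Set (ERule α)} {u : ERule α → ℕ → α}

/-- `δ` exhibits the redex `(optLhs (u ρ) ρ j)σ`, simulated at the basic positions `D`, as the
`j`-th stage of an application of `ρ` to `a`. -/
structure StageMatch (R : Set (ERule α)) (u : ERule α → ℕ → α) (D : Set Pos) (ρ : ERule α)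
    (j : ℕ) (σ : ℕ → Term α) (a : Term α) (δ : ℕ → Term α) : Prop where
  redStar : RedStar R a (ρ.lhs.subst δ)
  conds : ∀ i < j, RedStar R ((ρ.condLhs i).subst δ) ((ρ.condRhs i).subst δ)
  sim : ∀ (p : Pos) (x : ℕ), (optLhs (u ρ) ρ j).sub? p = some (.var x) →
    Sim R u (posBelow D p) (σ x) (δ x)
  eq_of_not_mem : ∀ x ∈ (optRhs (u ρ) ρ j).varFinset, x ∉ (optLhs (u ρ) ρ j).varFinset →
    δ x = σ x

theorem StageMatch.sim_optRhs (hfresh : UFresh F u R) {ρ : ERule α} (hρ : ρ ∈ R)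
    (hρF : ρ.overSig F) {j : ℕ} (hj : j ≤ ρ.conds.length) (hlin : (optLhs (u ρ) ρ j).Linear)
    {D : Set Pos} {σ δ : ℕ → Term α} {a : Term α} (h : StageMatch R u D ρ j σ a δ) :
    Sim R u (nextB D [] (optLhs (u ρ) ρ j) (optRhs (u ρ) ρ j)) ((optRhs (u ρ) ρ j).subst σ) a :=
  Sim.subst_optRhs hfresh hρ hρF hj h.redStar h.conds fun _ _ hp =>
    Sim.posBelow_nextB_nil hlin h.sim h.eq_of_not_mem hp

theorem exists_stageMatch_zero (hfresh : UFresh F u R) {ρ : ERule α} (hρF : ρ.overSig F)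
    (hlin : ρ.lhs.Linear) {D : Set Pos} {σ : ℕ → Term α} {a : Term α}
    (h : Sim R u D (ρ.lhs.subst σ) a) : ∃ δ, StageMatch R u D ρ 0 σ a δ := by
  obtain ⟨μ, hred, hsim, hμσ⟩ := h.exists_match hfresh hlin hρF.1
  exact ⟨μ, hred, by simp, hsim, fun x _ hx => hμσ x hx⟩

theorem exists_stageMatch_succ (hfresh : UFresh F u R) {ρ : ERule α} (hρ : ρ ∈ R)
    (hρF : ρ.overSig F) (hdet : ρ.Det) {j : ℕ} (hj : j < ρ.conds.length)
    (hlin : (optLhs (u ρ) ρ (j + 1)).Linear) {D : Set Pos} (hD : [] ∈ D) {σ : ℕ → Term α}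
    {a : Term α} (h : Sim R u D ((optLhs (u ρ) ρ (j + 1)).subst σ) a) :
    ∃ δ, StageMatch R u D ρ (j + 1) σ a δ := by
  classical
  rw [optLhs_succ] at hlin
  rw [optLhs_succ, subst_mkU] at h
  obtain ⟨δ₀, hred, hconds, hw, hvs⟩ := h.ublock_inv hfresh hρ hj hD
  obtain ⟨hlint, hdisj⟩ := hlin.of_mkU
  obtain ⟨μ, hredμ, hsimμ, hμσ⟩ := hw.exists_match hfresh hlint (hρF.condRhs hj)
  -- a variable of `t_j` in `X_j` would be in `Z_j`, which the linearity of the U-term excludes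
  have hXt : ∀ x ∈ ρ.Xset j, x ∉ (ρ.condRhs j).varFinset := fun x hX ht =>
    hdisj x ht (mem_seqOf.2 (ERule.mem_Zset.2 ⟨hX, ERule.condRhs_subset_Yset j ht⟩))
  let δ : ℕ → Term α := fun x => if x ∈ ρ.Xset j then δ₀ x else μ x
  have hδX : ∀ x ∈ ρ.Xset j, δ x = δ₀ x := fun x hx => if_pos hx
  have hδt : ∀ x ∈ (ρ.condRhs j).varFinset, δ x = μ x := fun x hx =>
    if_neg fun hX => hXt x hX hx
  refine ⟨δ, ?_, fun i hi => ?_, fun p x hp => ?_, fun x hxr hxl => ?_⟩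
  · rwa [Term.subst_congr fun x hx => hδX x (ERule.lhs_subset_Xset j hx)]
  · have hs : (ρ.condLhs i).varFinset ⊆ ρ.Xset j :=
      (hdet i (by omega)).trans (ERule.Xset_mono (by omega))
    rw [Term.subst_congr fun x hx => hδX x (hs hx)]
    rcases Nat.lt_succ_iff_lt_or_eq.1 hi with hi | rfl
    · rw [Term.subst_congr fun x hx => hδX x
        (ERule.Xset_mono hi (ERule.condRhs_subset_Xset_succ (hi.trans hj) hx))]
      exact hconds i hi
    · rwa [Term.subst_congr hδt]
  · rw [optLhs_succ] at hp
    rcases sub?_mkU_eq_var hp with ⟨p', rfl, hp'⟩ | ⟨k, rfl, hk⟩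
    · rw [hδt x (Term.mem_varFinset_of_sub? hp')]
      exact hsimμ p' x hp'
    · rw [hδX x (ERule.Zset_subset_Xset j (mem_seqOf.1 (List.mem_of_getElem? hk)))]
      simpa [List.getD_eq_getElem?_getD, hk] using hvs k (σ x) (by simp [hk])
  · rw [optLhs_succ, mem_varFinset_mkU, not_or, mem_seqOf] at hxl
    have hX : x ∉ ρ.Xset j := fun hX =>
      hxl.2 (ERule.mem_Zset.2 ⟨hX, varFinset_optRhs_succ_subset_Yset _ ρ j hxr⟩)
    exact (if_neg hX).trans (hμσ x hxl.1)

end Stages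

namespace Sim

variable {α : Type u} {F : Set α} {R : Set (ERule α)} {u : ERule α → ℕ → α}

theorem root_step (hfresh : UFresh F u R) {ρ : ERule α} (hρ : ρ ∈ R) (hρF : ρ.overSig F)
    (hdet : ρ.Det) (hLL : ∀ q ∈ unravelOpt (u ρ) ρ, q.LL) {j : ℕ} (hj : j ≤ ρ.conds.length)
    {D : Set Pos} (hD : [] ∈ D) {σ : ℕ → Term α} {a : Term α}
    (h : Sim R u D ((optLhs (u ρ) ρ j).subst σ) a) :
    Sim R u (nextB D [] (optLhs (u ρ) ρ j) (optRhs (u ρ) ρ j)) ((optRhs (u ρ) ρ j).subst σ) a := by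
  have hlin : (optLhs (u ρ) ρ j).Linear := hLL _ (mem_unravelOpt.2 ⟨j, hj, rfl⟩)
  obtain ⟨δ, hδ⟩ : ∃ δ, StageMatch R u D ρ j σ a δ := by
    cases j with
    | zero => exact exists_stageMatch_zero hfresh hρF hlin h
    | succ j => exact exists_stageMatch_succ hfresh hρ hρF hdet hj hlin hD h
  exact hδ.sim_optRhs hfresh hρ hρF hj hlin

theorem replaceAt {L Rr : Term α} {σ : ℕ → Term α}
    (hroot : ∀ {D : Set Pos} {a : Term α}, [] ∈ D → Sim R u D (L.subst σ) a →
      Sim R u (nextB D [] L Rr) (Rr.subst σ) a)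
    (p : Pos) {D : Set Pos} {m a : Term α} (hp : p ∈ D) (hm : m.sub? p = some (L.subst σ))
    (h : Sim R u D m a) : Sim R u (nextB D p L Rr) (Term.replaceAt (Rr.subst σ) p m) a := by
  induction p generalizing D m a with
  | nil => cases hm; exact hroot hp h
  | cons i p ih =>
    obtain ⟨f, ms, rfl, mi, hmi, hm⟩ := Term.sub?_cons_eq_some hm
    rw [Term.replaceAt_cons_app]
    have hchild : ∀ (k : ℕ) (x y : Term α), ms[k]? = some x → Sim R u (posBelow D [k]) x y →
        Sim R u (posBelow (nextB D (i :: p) L Rr) [k])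
          (if k = i then Term.replaceAt (Rr.subst σ) p x else x) y := by
      intro k x y hx hxy
      by_cases hki : k = i
      · subst hki
        obtain rfl : x = mi := Option.some_injective _ (hx.symm.trans hmi)
        rw [if_pos rfl]
        exact (ih hp hm hxy).mono posBelow_nextB_cons_self
      · rw [if_neg hki]
        exact hxy.mono (posBelow_nextB_cons_of_ne hki)
    rcases h.app_inv with ⟨as, hside, hred, hlen, hch⟩ |
      ⟨ρ, i₀, w, vs, δ, hρ, hi₀, rfl, rfl, hlen, hred, hconds, hw, hvs⟩
    · refine .node _ f _ as a (hside.imp_right nil_not_mem_nextB_cons) hred (by simp [hlen])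
        fun k x' y hx' hy => ?_
      obtain ⟨x, hx, rfl⟩ := Option.map_eq_some_iff.1 (List.getElem?_mapIdx ▸ hx')
      exact hchild k x y hx (hch k x y hx hy)
    · rw [List.mapIdx_cons]
      refine .ublock _ ρ i₀ _ _ a δ hρ hi₀ (by simpa using hlen) hred hconds
        (hchild 0 w _ rfl hw) fun k x' hx' => ?_
      obtain ⟨x, hx, rfl⟩ := Option.map_eq_some_iff.1 (List.getElem?_mapIdx ▸ hx')
      exact hchild (k + 1) x _ (by simpa using hx) (hvs k x hx)

theorem redStar_of_evSeq (hsig : ∀ ρ ∈ R, ρ.overSig F) (hdet : ∀ ρ ∈ R, ρ.Det)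
    (hLL : ∀ ρ ∈ R, ∀ q ∈ unravelOpt (u ρ) ρ, q.LL) (hfresh : UFresh F u R)
    {T : Term α → Prop} {B : Set Pos} {m t : Term α} (hev : EVSeq (UoptSys u R) T B m t)
    {a : Term α} (h : Sim R u B m a) (ht : t.overSig F) : RedStar R a t := by
  induction hev generalizing a with
  | refl => exact h.redStar_of_overSig hfresh ht
  | step p q σ hq _ hsub hs hpB _ _ ih =>
    obtain ⟨ρ, hρ, hq⟩ := hq
    obtain ⟨j, hj, rfl⟩ := mem_unravelOpt.1 hq
    subst hs
    exact ih (h.replaceAt (fun hD h => h.root_step hfresh hρ (hsig ρ hρ) (hdet ρ hρ)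
      (hLL ρ hρ) hj hD) p hpB hsub) ht

end Sim

theorem uopt_sound_of_ultraLL_EVsafe_general {α : Type u} (F : Set α) (R : Set (ERule α))
    (u : ERule α → ℕ → α)
    (hsig : ∀ ρ ∈ R, ρ.overSig F)
    (hdet : ∀ ρ ∈ R, ρ.Det)
    (hLL : ∀ ρ ∈ R, ∀ q ∈ unravelOpt (u ρ) ρ, q.LL)
    (hfresh : UFresh F u R) :
    ∀ s t : Term α, s.overSig F → t.overSig F →
      EVSafe (UoptSys u R) s t → RedStar R s t := by
  intro s t hs ht hev
  exact Sim.redStar_of_evSeq hsig hdet hLL hfresh hev (Sim.self_of_overSig hfresh hs _) ht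

/-- Let `R` be a `U_opt`-LL eDCTRS over a signature `F` that is
non-LV or non-RV. Then `U_opt` is sound for `R` w.r.t. EV-safe reduction: for all
terms `s, t ∈ T(F,V)`, if `s ↪*_{U_opt(R)} t` (an EV-safe reduction sequence of
`U_opt(R)`), then `s →*_R t`. -/
theorem uopt_sound_of_ultraLL_EVsafe {α : Type u} (F : Set α) (R : Set (ERule α))
    (u : ERule α → ℕ → α)
    (hsig : ∀ ρ ∈ R, ρ.overSig F)
    (hdet : ∀ ρ ∈ R, ρ.Det)
    (hLL : ∀ ρ ∈ R, ∀ q ∈ unravelOpt (u ρ) ρ, q.LL)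
    (hfresh : UFresh F u R)
    (hnv : (∀ ρ ∈ R, ρ.nonLV) ∨ (∀ ρ ∈ R, ρ.nonRV)) :
    ∀ s t : Term α, s.overSig F → t.overSig F →
      EVSafe (UoptSys u R) s t → RedStar R s t :=
  uopt_sound_of_ultraLL_EVsafe_general F R u hsig hdet hLL hfresh
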